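/- arXiv:2207.11273 — 2 statements merged into one kernel-verified Lean document; each statement's English description precedes it below -/
import Mathlib

section
/- Let n ≥ 2, let d be a positive integer, and let w be a word of length n such that w_i ≠ w_{n-i+1} for some index i. Then f(w,d) ≤ (1/4)((n+2)^d − (n−2)^d). -/
/-!
Fix `i` with `w i ≠ w i.rev` and put `I = i + 1`, `I' = n - i`. Reading each line containing `w`
in the direction in which it spells `w`, its points at positions `i` and `i.rev` form a pair
`(a, b)` with `G a = w i`, `G b = w i.rev`, and in every coordinate `a` and `b` either agree or
take the values `I`, `I'` in some order; distinct lines give distinct pairs. Collapsing the values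
`I`, `I'` to a single symbol sends `a` and `b` to the same cube `c`, which has `2 ^ z` points if `c`
has `z` collapsed coordinates. The two colour classes are disjoint, so the cube carries at most
`(2 ^ z) ^ 2 / 4` pairs, and `a ≠ b` forces `z ≥ 1`. Summing `4 ^ z` over the cubes with `z ≥ 1`
gives `(n + 2) ^ d - (n - 2) ^ d`.
-/

namespace WordGridHD

variable {α : Type*}

/-- `(p; v)` is the canonical pair of a line in the grid `[n]^d`: all entries of `v` lie in
`{-1, 0, +1}`, the first nonzero entry of `v` is `+1`, and all the points
`p, p + v, …, p + (n-1)v` have all coordinates in `[n] = {1, …, n}`. -/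
def IsCanonLine (n d : ℕ) (p v : Fin d → ℤ) : Prop :=
  (∀ j, v j = -1 ∨ v j = 0 ∨ v j = 1) ∧
  (∃ j, v j = 1 ∧ ∀ j' < j, v j' = 0) ∧
  (∀ i : ℕ, i < n → ∀ j, 1 ≤ p j + i * v j ∧ p j + i * v j ≤ n)

/-- The line with canonical pair `(p; v)` contains the word `w` (forwards or backwards)
in the grid `G`. -/
def lineC {n d : ℕ} (w : Fin n → α) (G : (Fin d → ℤ) → α) (p v : Fin d → ℤ) : Prop :=
  (∀ i : Fin n, G (fun j => p j + (i : ℕ) * v j) = w i) ∨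
  (∀ i : Fin n, G (fun j => p j + (i : ℕ) * v j) = w i.rev)

/-- `f(w,G)`: the number of lines of `[n]^d` containing `w` in the grid `G`. -/
noncomputable def count {n : ℕ} (d : ℕ) (w : Fin n → α) (G : (Fin d → ℤ) → α) : ℕ :=
  {pv : (Fin d → ℤ) × (Fin d → ℤ) |
    IsCanonLine n d pv.1 pv.2 ∧ lineC w G pv.1 pv.2}.ncard

/-- `f(w,d)`: the maximum of `f(w,G)` over all `(n,d)`-grids `G`. -/
noncomputable def fword {n : ℕ} (w : Fin n → α) (d : ℕ) : ℕ :=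
  sSup {m | ∃ G : (Fin d → ℤ) → α, count d w G = m}

open Finset Fintype

section LinkedPairs

variable {ι β : Type*} {I I' : β}

def Linked (I I' x y : β) : Prop :=
  x = y ∨ (x = I ∧ y = I') ∨ (x = I' ∧ y = I)

theorem Linked.symm {x y : β} (h : Linked I I' x y) : Linked I I' y x := by
  rcases h with rfl | ⟨rfl, rfl⟩ | ⟨rfl, rfl⟩ <;> simp [Linked]

variable [DecidableEq β]

instance (I I' x y : β) : Decidable (Linked I I' x y) := by
  unfold Linked; infer_instance

def collapse (I I' x : β) : Option β :=
  if x = I ∨ x = I' then none else some x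

def cell (I I' : β) : Option β → Finset β
  | none => {I, I'}
  | some x => {x}

theorem collapse_eq_of_linked {x y : β} (h : Linked I I' x y) :
    collapse I I' x = collapse I I' y := by
  rcases h with rfl | ⟨rfl, rfl⟩ | ⟨rfl, rfl⟩ <;> simp [collapse]

theorem mem_cell_collapse (x : β) : x ∈ cell I I' (collapse I I' x) := by
  unfold collapse
  split_ifs with h
  · simpa [cell] using h
  · simp [cell]

theorem collapse_mem_insertNone {T : Finset β} {x : β} (hx : x ∈ T) :
    collapse I I' x ∈ (T \ {I, I'}).insertNone := by
  unfold collapse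
  split_ifs with h
  · exact mem_insertNone.2 fun _ h' => nomatch h'
  · simpa [hx] using h

theorem collapse_eq_none_of_linked_of_ne {x y : β} (h : Linked I I' x y) (hxy : x ≠ y) :
    collapse I I' x = none := by
  rcases h with h | ⟨rfl, -⟩ | ⟨rfl, -⟩
  · exact absurd h hxy
  all_goals simp [collapse]

theorem four_mul_card_mul_card_le_sq {A B K : Finset β} (hAB : Disjoint A B)
    (hA : A ⊆ K) (hB : B ⊆ K) : 4 * (#A * #B) ≤ #K ^ 2 :=
  calc 4 * (#A * #B) ≤ (#A + #B) ^ 2 := by rw [← mul_assoc]; exact four_mul_le_sq_add _ _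
    _ = #(A ∪ B) ^ 2 := by rw [card_union_of_disjoint hAB]
    _ ≤ #K ^ 2 := by gcongr; exact union_subset hA hB

variable [Fintype ι] [DecidableEq ι]

def linkedPairs (I I' : β) (X Y : Finset (ι → β)) : Finset ((ι → β) × (ι → β)) :=
  {ab ∈ X ×ˢ Y | ∀ k, Linked I I' (ab.1 k) (ab.2 k)}

theorem four_mul_card_fiber_le {X Y : Finset (ι → β)} (hXY : Disjoint X Y) (c : ι → Option β) :
    4 * #{ab ∈ linkedPairs I I' X Y | collapse I I' ∘ ab.1 = c} ≤
      ∏ k, #(cell I I' (c k)) ^ 2 := by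
  set K := piFinset fun k => cell I I' (c k)
  have hK : ∀ a : ι → β, collapse I I' ∘ a = c → a ∈ K := by
    rintro a rfl
    exact mem_piFinset.2 fun k => mem_cell_collapse (a k)
  set X' := {a ∈ X | collapse I I' ∘ a = c}
  set Y' := {b ∈ Y | collapse I I' ∘ b = c}
  have hsub : {ab ∈ linkedPairs I I' X Y | collapse I I' ∘ ab.1 = c} ⊆ X' ×ˢ Y' := by
    rintro ⟨a, b⟩ hab
    simp only [linkedPairs, mem_filter, mem_product] at hab
    obtain ⟨⟨⟨ha, hb⟩, hlinked⟩, rfl⟩ := hab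
    refine mem_product.2 ⟨mem_filter.2 ⟨ha, rfl⟩, mem_filter.2 ⟨hb, ?_⟩⟩
    funext k
    exact (collapse_eq_of_linked (hlinked k)).symm
  calc 4 * #{ab ∈ linkedPairs I I' X Y | collapse I I' ∘ ab.1 = c}
      ≤ 4 * (#X' * #Y') := by rw [← card_product]; gcongr
    _ ≤ #K ^ 2 := four_mul_card_mul_card_le_sq (disjoint_filter_filter hXY)
        (fun a ha => hK a (mem_filter.1 ha).2) (fun b hb => hK b (mem_filter.1 hb).2)
    _ = ∏ k, #(cell I I' (c k)) ^ 2 := by rw [card_piFinset, prod_pow]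

theorem sum_prod_card_cell_sq (hII' : I ≠ I') (S : Finset β) :
    ∑ c ∈ piFinset (fun _ : ι => S.insertNone), ∏ k, #(cell I I' (c k)) ^ 2 =
      (#S + 4) ^ Fintype.card ι := by
  rw [← prod_univ_sum _ fun _ o => #(cell I I' o) ^ 2, prod_const, card_univ]
  simp [sum_insertNone, cell, hII', add_comm]

theorem sum_prod_card_cell_sq_some (S : Finset β) :
    ∑ c ∈ piFinset (fun _ : ι => S.map .some), ∏ k, #(cell I I' (c k)) ^ 2 =
      #S ^ Fintype.card ι := by
  rw [← prod_univ_sum _ fun _ o => #(cell I I' o) ^ 2, prod_const, card_univ]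
  simp [cell]

theorem four_mul_card_linkedPairs_add_le {T : Finset β} (hI : I ∈ T) (hI' : I' ∈ T)
    (hII' : I ≠ I') {X Y : Finset (ι → β)} (hXY : Disjoint X Y) (hX : X ⊆ piFinset fun _ => T) :
    4 * #(linkedPairs I I' X Y) + (#T - 2) ^ Fintype.card ι ≤ (#T + 2) ^ Fintype.card ι := by
  set S := T \ {I, I'}
  have hS : #S + 2 = #T := by
    have hsub : {I, I'} ⊆ T := insert_subset hI (singleton_subset_iff.2 hI')
    have := card_le_card hsub
    rw [card_sdiff_of_subset hsub, card_pair hII'] at *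
    omega
  set W : (ι → Option β) → ℕ := fun c => ∏ k, #(cell I I' (c k)) ^ 2
  set cubes := piFinset fun _ : ι => S.insertNone
  set cubes₀ := piFinset fun _ : ι => S.map .some
  set P := linkedPairs I I' X Y
  have hcubes₀ : cubes₀ ⊆ cubes := piFinset_subset _ _ fun _ => by
    intro o ho
    obtain ⟨x, hx, rfl⟩ := mem_map.1 ho
    exact mem_insertNone.2 fun _ h => Option.some_inj.1 h ▸ hx
  have himage : P.image (collapse I I' ∘ ·.1) ⊆ cubes \ cubes₀ := by
    intro c hc
    obtain ⟨⟨a, b⟩, hab, rfl⟩ := mem_image.1 hc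
    simp only [P, linkedPairs, mem_filter, mem_product] at hab
    obtain ⟨⟨ha, hb⟩, hlinked⟩ := hab
    obtain ⟨k, hk⟩ : ∃ k, a k ≠ b k := by
      by_contra! h
      exact disjoint_left.1 hXY ha (funext h ▸ hb)
    refine mem_sdiff.2 ⟨mem_piFinset.2 fun j => collapse_mem_insertNone (mem_piFinset.1 (hX ha) j),
      fun h => ?_⟩
    have := mem_piFinset.1 h k
    simp [collapse_eq_none_of_linked_of_ne (hlinked k) hk] at this
  calc 4 * #P + (#T - 2) ^ Fintype.card ι
      = ∑ c ∈ P.image (collapse I I' ∘ ·.1), 4 * #{ab ∈ P | collapse I I' ∘ ab.1 = c}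
          + ∑ c ∈ cubes₀, W c := by
        rw [← mul_sum, ← card_eq_sum_card_image, sum_prod_card_cell_sq_some, ← hS,
          Nat.add_sub_cancel]
    _ ≤ ∑ c ∈ cubes \ cubes₀, W c + ∑ c ∈ cubes₀, W c := by
        gcongr ?_ + _
        exact (sum_le_sum fun c _ => four_mul_card_fiber_le hXY c).trans
          (sum_le_sum_of_subset himage)
    _ = (#T + 2) ^ Fintype.card ι := by
        rw [sum_sdiff hcubes₀, sum_prod_card_cell_sq hII', ← hS]

end LinkedPairs

section Lines

theorem eq_of_add_smul_eq_add_smul {R M : Type*} [CommRing R] [IsDomain R] [AddCommGroup M]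
    [Module R M] [Module.IsTorsionFree R M] {s t : R} (hst : s ≠ t) {p v q u : M}
    (hs : p + s • v = q + s • u) (ht : p + t • v = q + t • u) : p = q ∧ v = u := by
  have hv : v = u := smul_right_injective M (sub_ne_zero.2 hst) <| by
    simp only [sub_smul]
    linear_combination (norm := module) hs - ht
  subst hv
  exact ⟨add_right_cancel hs, rfl⟩

theorem eq_neg_of_add_smul_eq_add_smul_swap {R M : Type*} [CommRing R] [IsDomain R]
    [AddCommGroup M] [Module R M] [Module.IsTorsionFree R M] {s t : R} (hst : s ≠ t)
    {p v q u : M} (hs : p + s • v = q + t • u) (ht : p + t • v = q + s • u) : v = -u :=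
  smul_right_injective M (sub_ne_zero.2 hst) <| by
    simp only [sub_smul, smul_neg]
    linear_combination (norm := module) hs - ht

variable {n d : ℕ} {p v : Fin d → ℤ}

theorem IsCanonLine.not_neg {q : Fin d → ℤ} (h : IsCanonLine n d p v) :
    ¬ IsCanonLine n d q (-v) := by
  rintro ⟨-, ⟨j', hj'1, hj'0⟩, -⟩
  obtain ⟨-, ⟨j, hj1, hj0⟩, -⟩ := h
  rcases lt_trichotomy j j' with hlt | rfl | hlt
  · have := hj'0 j hlt; simp_all
  · simp_all
  · have := hj0 j' hlt; simp_all

theorem IsCanonLine.linked (h : IsCanonLine n d p v) (i : Fin n) (k : Fin d) :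
    Linked ((i : ℕ) + 1 : ℤ) ((i.rev : ℕ) + 1 : ℤ)
      ((p + ((i : ℕ) : ℤ) • v) k) ((p + ((i.rev : ℕ) : ℤ) • v) k) := by
  have := i.isLt
  have h0 := h.2.2 0 (by omega) k
  have h1 := h.2.2 (n - 1) (by omega) k
  have hrev : ((i.rev : ℕ) : ℤ) = n - 1 - i := by rw [Fin.val_rev]; omega
  simp only [Pi.add_apply, Pi.smul_apply, smul_eq_mul, Linked, hrev]
  rcases h.1 k with hv | hv | hv <;> simp only [hv] at h0 h1 ⊢ <;> push_cast at h0 h1 ⊢ <;> omega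

noncomputable def gridPoints (n d : ℕ) : Finset (Fin d → ℤ) :=
  piFinset fun _ => Icc (1 : ℤ) n

theorem count_le_card_linkedPairs [DecidableEq α] (w : Fin n → α) (G : (Fin d → ℤ) → α)
    {i : Fin n} (hi : i ≠ i.rev) :
    count d w G ≤ #(linkedPairs ((i : ℕ) + 1 : ℤ) ((i.rev : ℕ) + 1 : ℤ)
      {a ∈ gridPoints n d | G a = w i} {b ∈ gridPoints n d | G b = w i.rev}) := by
  classical
  let pt (pv : (Fin d → ℤ) × (Fin d → ℤ)) (r : Fin n) : Fin d → ℤ := pv.1 + ((r : ℕ) : ℤ) • pv.2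
  -- Orienting by the reading direction makes `Φ` injective: two canonical lines with swapped
  -- images would have opposite directions.
  let Φ (pv : (Fin d → ℤ) × (Fin d → ℤ)) : (Fin d → ℤ) × (Fin d → ℤ) :=
    if ∀ r, G (pt pv r) = w r then (pt pv i, pt pv i.rev) else (pt pv i.rev, pt pv i)
  have hi' : ((i : ℕ) : ℤ) ≠ ((i.rev : ℕ) : ℤ) := by
    exact_mod_cast Fin.val_ne_of_ne hi
  refine (Set.ncard_le_ncard_of_injOn Φ ?_ ?_ (finite_toSet _)).trans (Set.ncard_coe_finset _).le
  · rintro ⟨p, v⟩ ⟨hline, hw⟩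
    have hpt : ∀ r, pt (p, v) r ∈ gridPoints n d := fun r =>
      mem_piFinset.2 fun k => mem_Icc.2 (hline.2.2 r r.isLt k)
    simp only [mem_coe, linkedPairs, mem_filter, mem_product, Φ]
    split_ifs with hf
    · exact ⟨⟨⟨hpt i, hf i⟩, hpt i.rev, hf i.rev⟩, hline.linked i⟩
    · have hb := hw.resolve_left hf
      exact ⟨⟨⟨hpt i.rev, (hb i.rev).trans (congrArg w i.rev_rev)⟩, hpt i, hb i⟩,
        fun k => (hline.linked i k).symm⟩
  · rintro ⟨p, v⟩ ⟨hline, -⟩ ⟨p', v'⟩ ⟨hline', -⟩ heq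
    simp only [Φ] at heq
    split_ifs at heq <;> simp only [Prod.mk.injEq] at heq
    · exact Prod.ext_iff.2 (eq_of_add_smul_eq_add_smul hi' heq.1 heq.2)
    · have hv : v = -v' := eq_neg_of_add_smul_eq_add_smul_swap hi' heq.1 heq.2
      exact absurd (hv ▸ hline) hline'.not_neg
    · have hv : v = -v' := eq_neg_of_add_smul_eq_add_smul_swap hi'.symm heq.1 heq.2
      exact absurd (hv ▸ hline) hline'.not_neg
    · exact Prod.ext_iff.2 (eq_of_add_smul_eq_add_smul hi'.symm heq.1 heq.2)

theorem four_mul_count_add_le [DecidableEq α] (w : Fin n → α) {i : Fin n} (hi : w i ≠ w i.rev)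
    (G : (Fin d → ℤ) → α) : 4 * count d w G + (n - 2) ^ d ≤ (n + 2) ^ d := by
  have hI : ((i : ℕ) + 1 : ℤ) ∈ Icc (1 : ℤ) n := mem_Icc.2 ⟨by omega, by omega⟩
  have hI' : ((i.rev : ℕ) + 1 : ℤ) ∈ Icc (1 : ℤ) n := mem_Icc.2 ⟨by omega, by omega⟩
  have hne : i ≠ i.rev := fun h => hi (congrArg w h)
  have hII' : ((i : ℕ) + 1 : ℤ) ≠ (i.rev : ℕ) + 1 := by
    have := Fin.val_ne_of_ne hne
    omega
  have hXY : Disjoint {a ∈ gridPoints n d | G a = w i} {b ∈ gridPoints n d | G b = w i.rev} :=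
    disjoint_filter_filter' _ _ fun _ hX hY a ha => hi ((hX a ha).symm.trans (hY a ha))
  have := four_mul_card_linkedPairs_add_le hI hI' hII' hXY (filter_subset _ _)
  have := count_le_card_linkedPairs w G hne
  simp only [Int.card_Icc, add_sub_cancel_right, Int.toNat_natCast, Fintype.card_fin] at *
  omega

end Lines

theorem nonpalindrome_upper_hd_general {n : ℕ} (w : Fin n → α) (hnp : ∃ i, w i ≠ w i.rev) (d : ℕ) :
    4 * fword w d ≤ (n + 2) ^ d - (n - 2) ^ d := by
  classical
  obtain ⟨i, hi⟩ := hnp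
  have hcount : ∀ G, count d w G ≤ ((n + 2) ^ d - (n - 2) ^ d) / 4 := fun G => by
    have := four_mul_count_add_le w hi G
    omega
  calc 4 * fword w d ≤ 4 * (((n + 2) ^ d - (n - 2) ^ d) / 4) := by
        gcongr
        exact csSup_le' (by rintro _ ⟨G, rfl⟩; exact hcount G)
    _ ≤ (n + 2) ^ d - (n - 2) ^ d := Nat.mul_div_le _ _

theorem nonpalindrome_upper_hd {n : ℕ} (hn : 2 ≤ n) (w : Fin n → α)
    (hnp : ∃ i, w i ≠ w i.rev) (d : ℕ) (hd : 1 ≤ d) :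
    4 * fword w d ≤ (n + 2) ^ d - (n - 2) ^ d :=
  nonpalindrome_upper_hd_general w hnp d

end WordGridHD
end

section
/- Let w be a word of length k ≥ 2 and let n ≥ k. Then f(w,n,1)·(3n − 4k) ≤ f(w,n,2) ≤ f(w,n,1)·2n + 4·∑_{i=k}^{n} f(w,i,1). -/
namespace ShortWordGrid

variable {α : Type*}

/-- `(p; v)` is the canonical pair of a line of length `k` in the grid `[n]^d`: all entries
of `v` lie in `{-1, 0, +1}`, the first nonzero entry of `v` is `+1`, and all the points
`p, p + v, …, p + (k-1)v` have all coordinates in `[n] = {1, …, n}`. -/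
def IsCanonLine (n k d : ℕ) (p v : Fin d → ℤ) : Prop :=
  (∀ j, v j = -1 ∨ v j = 0 ∨ v j = 1) ∧
  (∃ j, v j = 1 ∧ ∀ j' < j, v j' = 0) ∧
  (∀ i : ℕ, i < k → ∀ j, 1 ≤ p j + i * v j ∧ p j + i * v j ≤ n)

/-- The line of length `k` with canonical pair `(p; v)` contains the word `w`
(forwards or backwards) in the grid `G`. -/
def lineC {k : ℕ} (d : ℕ) (w : Fin k → α) (G : (Fin d → ℤ) → α) (p v : Fin d → ℤ) : Prop :=
  (∀ i : Fin k, G (fun j => p j + (i : ℕ) * v j) = w i) ∨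
  (∀ i : Fin k, G (fun j => p j + (i : ℕ) * v j) = w i.rev)

/-- `f(w,G)`: the number of lines of length `k` in `[n]^d` containing `w` in the grid `G`. -/
noncomputable def count {k : ℕ} (n d : ℕ) (w : Fin k → α) (G : (Fin d → ℤ) → α) : ℕ :=
  {pv : (Fin d → ℤ) × (Fin d → ℤ) |
    IsCanonLine n k d pv.1 pv.2 ∧ lineC d w G pv.1 pv.2}.ncard

/-- `f(w,n,d)`: the maximum of `f(w,G)` over all `(n,d)`-grids `G`. -/
noncomputable def fword {k : ℕ} (w : Fin k → α) (n d : ℕ) : ℕ :=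
  sSup {m | ∃ G : (Fin d → ℤ) → α, count n d w G = m}

/-!
Every line of `[n]²` has direction `(1,0)`, `(0,1)`, `(1,1)` or `(1,-1)`. For the lower bound take
an optimal one-dimensional grid `G₁` and put `G(x, y) = G₁(x)`: each line of `G₁` reappears in each
of the `n` rows, and also along `n + 1 - k` diagonals and `n + 1 - k` antidiagonals, since
there the first coordinate still runs through `t, t + 1, …, t + k - 1`. Hence
`f(w,n,2) ≥ (3n - 2k + 2) f(w,n,1)`. For the upper bound, a line of direction `v` lies on a
maximal line of direction `v` in `[n]²`, which is a one-dimensional grid: of length `n` for rows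
and columns, of length `n - |c|` for the diagonal `x - y = c` and for the antidiagonal
`x + y = n + 1 + c`, where `|c| ≤ n - k`. Each length `i ∈ [k, n]` therefore occurs for at most
two diagonals and two antidiagonals.
-/

def lineStarts {k : ℕ} (n d : ℕ) (w : Fin k → α) (G : (Fin d → ℤ) → α) (v : Fin d → ℤ) :
    Set (Fin d → ℤ) :=
  {p | IsCanonLine n k d p v ∧ lineC d w G p v}

section

variable {k n d : ℕ}

lemma IsCanonLine.start_mem_Icc (hk : 0 < k) {p v : Fin d → ℤ} (h : IsCanonLine n k d p v) :
    p ∈ Set.Icc 1 (fun _ => (n : ℤ)) :=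
  ⟨fun j => by simpa using (h.2.2 0 hk j).1, fun j => by simpa using (h.2.2 0 hk j).2⟩

lemma IsCanonLine.dir_mem_Icc {p v : Fin d → ℤ} (h : IsCanonLine n k d p v) :
    v ∈ Set.Icc (-1) 1 :=
  ⟨fun j => by rcases h.1 j with h | h | h <;> simp [h],
   fun j => by rcases h.1 j with h | h | h <;> simp [h]⟩

lemma IsCanonLine.of_head_eq_one {p v : Fin (d + 1) → ℤ} (hv0 : v 0 = 1)
    (hv : ∀ j, v j = -1 ∨ v j = 0 ∨ v j = 1)
    (hp : ∀ i : ℕ, i < k → ∀ j, 1 ≤ p j + i * v j ∧ p j + i * v j ≤ n) :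
    IsCanonLine n k (d + 1) p v :=
  ⟨hv, ⟨0, hv0, fun j hj => absurd hj (Fin.not_lt_zero j)⟩, hp⟩

lemma IsCanonLine.endpoint_bounds (hk : 0 < k) {p v : Fin d → ℤ} (h : IsCanonLine n k d p v)
    (j : Fin d) :
    (1 ≤ p j ∧ p j ≤ n) ∧ (1 ≤ p j + (k - 1) * v j ∧ p j + (k - 1) * v j ≤ n) := by
  have h0 := h.2.2 0 hk j
  have h1 := h.2.2 (k - 1) (by omega) j
  rw [Nat.cast_sub hk, Nat.cast_one] at h1
  simpa using And.intro h0 h1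

lemma isCanonLine_one_iff {p : Fin 1 → ℤ} :
    IsCanonLine n k 1 p 1 ↔ ∀ i : ℕ, i < k → 1 ≤ p 0 + i ∧ p 0 + i ≤ n := by
  refine ⟨fun h i hi => by simpa using h.2.2 i hi 0, fun h => ?_⟩
  refine IsCanonLine.of_head_eq_one rfl (fun _ => by simp) fun i hi j => ?_
  fin_cases j
  simpa using h i hi

lemma IsCanonLine.eq_one {p v : Fin 1 → ℤ} (h : IsCanonLine n k 1 p v) : v = 1 := by
  obtain ⟨-, ⟨j, hj, -⟩, -⟩ := h
  funext j'
  rw [Subsingleton.elim j' j, hj, Pi.one_apply]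

lemma IsCanonLine.dir_mem_two {p v : Fin 2 → ℤ} (h : IsCanonLine n k 2 p v) :
    v ∈ ({![1, 0], ![0, 1], ![1, 1], ![1, -1]} : Finset (Fin 2 → ℤ)) := by
  obtain ⟨hv, ⟨j, hj, hlt⟩, -⟩ := h
  fin_cases j
  · rcases hv 1 with h | h | h <;> simp_all [funext_iff, Fin.forall_fin_two]
  · have h0 : v 0 = 0 := hlt 0 (by decide)
    simp_all [funext_iff, Fin.forall_fin_two]

lemma lineC_congr {d' : ℕ} {w : Fin k → α} {G : (Fin d → ℤ) → α} {H : (Fin d' → ℤ) → α}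
    {p v : Fin d → ℤ} {q u : Fin d' → ℤ}
    (h : ∀ i : ℕ, H (fun j => q j + i * u j) = G (fun j => p j + i * v j)) :
    lineC d' w H q u ↔ lineC d w G p v := by
  simp only [lineC, h]

variable (w : Fin k → α)

lemma lineStarts_finite (hk : 0 < k) (G : (Fin d → ℤ) → α) (v : Fin d → ℤ) :
    (lineStarts n d w G v).Finite :=
  (Set.finite_Icc _ _).subset fun _ hp => hp.1.start_mem_Icc hk

lemma count_eq_sum_ncard_lineStarts (hk : 0 < k) (G : (Fin d → ℤ) → α) (D : Finset (Fin d → ℤ))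
    (hD : ∀ p v, IsCanonLine n k d p v → v ∈ D) :
    count n d w G = ∑ v ∈ D, (lineStarts n d w G v).ncard := by
  have hunion : {pv : (Fin d → ℤ) × (Fin d → ℤ) |
      IsCanonLine n k d pv.1 pv.2 ∧ lineC d w G pv.1 pv.2} =
      ⋃ v ∈ (D : Set (Fin d → ℤ)), (fun p => (p, v)) '' lineStarts n d w G v := by
    ext ⟨p, v⟩
    simp only [Set.mem_ofPred_eq, Set.mem_iUnion, Set.mem_image, Prod.mk.injEq, lineStarts]
    exact ⟨fun h => ⟨v, hD p v h.1, p, h, rfl, rfl⟩, by rintro ⟨_, -, _, h, rfl, rfl⟩; exact h⟩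
  have hdisj : (D : Set (Fin d → ℤ)).PairwiseDisjoint
      fun v => (fun p => (p, v)) '' lineStarts n d w G v := by
    refine fun v _ v' _ hne => Set.disjoint_left.2 ?_
    rintro _ ⟨p, -, rfl⟩ ⟨p', -, h⟩
    exact hne (congrArg Prod.snd h).symm
  rw [count, hunion, Set.Finite.ncard_biUnion D.finite_toSet
    (fun v _ => (lineStarts_finite w hk G v).image _) hdisj, finsum_mem_coe_finset]
  exact Finset.sum_congr rfl fun v _ => Set.ncard_image_of_injective _ (Prod.mk_left_injective v)

lemma count_one_eq (hk : 0 < k) (H : (Fin 1 → ℤ) → α) :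
    count n 1 w H = (lineStarts n 1 w H 1).ncard := by
  rw [count_eq_sum_ncard_lineStarts w hk H {1} fun _ _ h => Finset.mem_singleton.2 h.eq_one,
    Finset.sum_singleton]

lemma count_two_eq (hk : 0 < k) (G : (Fin 2 → ℤ) → α) :
    count n 2 w G = (lineStarts n 2 w G ![1, 0]).ncard + (lineStarts n 2 w G ![0, 1]).ncard +
      (lineStarts n 2 w G ![1, 1]).ncard + (lineStarts n 2 w G ![1, -1]).ncard := by
  rw [count_eq_sum_ncard_lineStarts w hk G _ fun _ _ h => h.dir_mem_two]
  simp [Finset.sum_insert, funext_iff, Fin.forall_fin_two, add_assoc]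

lemma bddAbove_count (hk : 0 < k) : BddAbove {m | ∃ G : (Fin d → ℤ) → α, count n d w G = m} := by
  refine ⟨(Set.Icc (1 : Fin d → ℤ) (fun _ => (n : ℤ)) ×ˢ Set.Icc (-1 : Fin d → ℤ) 1).ncard, ?_⟩
  rintro _ ⟨G, rfl⟩
  exact Set.ncard_le_ncard (fun _ h => ⟨h.1.start_mem_Icc hk, h.1.dir_mem_Icc⟩)
    ((Set.finite_Icc _ _).prod (Set.finite_Icc _ _))

lemma count_le_fword (hk : 0 < k) (G : (Fin d → ℤ) → α) : count n d w G ≤ fword w n d :=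
  le_csSup (bddAbove_count w hk) ⟨G, rfl⟩

lemma fword_le_of_forall_count_le (hk : 0 < k) {B : ℕ}
    (h : ∀ G : (Fin d → ℤ) → α, count n d w G ≤ B) : fword w n d ≤ B :=
  csSup_le ⟨_, fun _ => w ⟨0, hk⟩, rfl⟩ (by rintro _ ⟨G, rfl⟩; exact h G)

lemma exists_count_eq_fword (hk : 0 < k) : ∃ G : (Fin d → ℤ) → α, count n d w G = fword w n d :=
  Nat.sSup_mem (s := {m | ∃ G, count n d w G = m}) ⟨_, fun _ => w ⟨0, hk⟩, rfl⟩
    (bddAbove_count w hk)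

lemma ncard_lineStarts_le_sum_fword (hk : 0 < k) (G : (Fin d → ℤ) → α) (v : Fin d → ℤ)
    (I : Finset ℤ) (κ τ : (Fin d → ℤ) → ℤ) (a : ℤ → Fin d → ℤ) (m : ℤ → ℕ)
    -- `κ p` indexes the maximal line through `p` in direction `v`, namely `t ↦ a c + t • v` for
    -- `t ∈ [1, m c]`, and `τ p` is the position of `p` on it.
    (h : ∀ p ∈ lineStarts n d w G v,
      κ p ∈ I ∧ p = a (κ p) + τ p • v ∧ 1 ≤ τ p ∧ τ p + k ≤ m (κ p) + 1) :
    (lineStarts n d w G v).ncard ≤ ∑ c ∈ I, fword w (m c) 1 := by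
  have hcover : lineStarts n d w G v = ⋃ c ∈ I, {p ∈ lineStarts n d w G v | κ p = c} := by
    ext p
    simp only [Set.mem_iUnion, Set.mem_sep_iff, exists_prop]
    exact ⟨fun hp => ⟨κ p, (h p hp).1, hp, rfl⟩, fun ⟨_, _, hp, _⟩ => hp⟩
  have hfibre (c : ℤ) : {p ∈ lineStarts n d w G v | κ p = c}.ncard ≤
      count (m c) 1 w (fun q => G (a c + q 0 • v)) := by
    rw [count_one_eq w hk]
    refine Set.ncard_le_ncard_of_injOn (fun p _ => τ p) ?_ ?_ (lineStarts_finite w hk _ _)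
    · rintro p ⟨hp, rfl⟩
      obtain ⟨-, hpa, hτ1, hτm⟩ := h p hp
      refine ⟨isCanonLine_one_iff.2 fun i hi => by omega, (lineC_congr fun i => ?_).2 hp.2⟩
      conv_rhs => rw [hpa]
      congr 1
      funext j
      simp only [Pi.add_apply, Pi.smul_apply, smul_eq_mul, Pi.one_apply]
      ring
    · rintro p ⟨hp, rfl⟩ p' ⟨hp', hκ⟩ hτ
      rw [(h p hp).2.1, (h p' hp').2.1, hκ, show τ p = τ p' from congrFun hτ 0]
  calc (lineStarts n d w G v).ncard
      = (⋃ c ∈ I, {p ∈ lineStarts n d w G v | κ p = c}).ncard := congrArg _ hcover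
    _ ≤ ∑ c ∈ I, {p ∈ lineStarts n d w G v | κ p = c}.ncard := Finset.set_ncard_biUnion_le I _
    _ ≤ ∑ c ∈ I, fword w (m c) 1 :=
        Finset.sum_le_sum fun c _ => (hfibre c).trans (count_le_fword w hk _)

lemma card_mul_ncard_le_ncard_lineStarts_two (hk : 0 < k) (G : (Fin 1 → ℤ) → α) {b : ℤ}
    (hb : b = -1 ∨ b = 0 ∨ b = 1) (Y : Finset ℕ)
    (hY : ∀ y ∈ Y, ∀ i : ℕ, i < k → 1 ≤ (y : ℤ) + i * b ∧ (y : ℤ) + i * b ≤ n) :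
    Y.card * (lineStarts n 1 w G 1).ncard ≤
      (lineStarts n 2 w (fun q => G (fun _ => q 0)) ![1, b]).ncard := by
  rw [← Set.ncard_coe_finset, ← Set.ncard_prod]
  refine Set.ncard_le_ncard_of_injOn (fun yp => ![yp.2 0, (yp.1 : ℤ)]) ?_ ?_
    (lineStarts_finite w hk _ _)
  · rintro ⟨y, p⟩ ⟨hy, hp⟩
    have hp0 := isCanonLine_one_iff.1 hp.1
    refine ⟨IsCanonLine.of_head_eq_one rfl (fun j => ?_) fun i hi j => ?_,
      (lineC_congr fun i => ?_).2 hp.2⟩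
    · fin_cases j <;> simp [hb]
    · fin_cases j
      · simpa using hp0 i hi
      · simpa using hY y hy i hi
    · congr 1
      funext j
      simp [Subsingleton.elim j 0]
  · rintro ⟨y, p⟩ - ⟨y', p'⟩ - h
    simp only [Matrix.vecCons_inj, Nat.cast_inj, and_true] at h
    simp only [Prod.mk.injEq, h.2, true_and]
    funext j
    rw [Subsingleton.elim j 0, h.1]

lemma sum_Icc_natAbs_le (g : ℕ → ℕ) :
    ∑ c ∈ Finset.Icc ((k : ℤ) - n) (n - k), g (n - c.natAbs) ≤ 2 * ∑ i ∈ Finset.Icc k n, g i := by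
  classical
  rw [Finset.sum_comp]
  calc _ ≤ ∑ b ∈ (Finset.Icc ((k : ℤ) - n) (n - k)).image (fun c => n - c.natAbs), 2 * g b := by
        refine Finset.sum_le_sum fun b _ => Nat.mul_le_mul_right _ ?_
        refine (Finset.card_le_card fun c hc => ?_).trans
          (Finset.card_le_two (a := (n : ℤ) - b) (b := (b : ℤ) - n))
        simp only [Finset.mem_filter, Finset.mem_Icc] at hc
        simp only [Finset.mem_insert, Finset.mem_singleton]
        omega
    _ ≤ 2 * ∑ i ∈ Finset.Icc k n, g i := by
        rw [← Finset.mul_sum]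
        refine Nat.mul_le_mul_left _ (Finset.sum_le_sum_of_subset fun i hi => ?_)
        simp only [Finset.mem_image, Finset.mem_Icc] at hi ⊢
        omega

lemma ncard_lineStarts_row_le (hk : 0 < k) (G : (Fin 2 → ℤ) → α) :
    (lineStarts n 2 w G ![1, 0]).ncard ≤ n * fword w n 1 :=
  calc (lineStarts n 2 w G ![1, 0]).ncard ≤ ∑ _c ∈ Finset.Icc (1 : ℤ) n, fword w n 1 := by
        refine ncard_lineStarts_le_sum_fword w hk G _ _ (fun p => p 1) (fun p => p 0)
          (fun c => ![0, c]) (fun _ => n) fun p hp => ?_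
        have h0 := hp.1.endpoint_bounds hk 0
        have h1 := hp.1.endpoint_bounds hk 1
        simp only [Matrix.cons_val_zero, Matrix.cons_val_one, mul_one, mul_zero, add_zero] at h0 h1
        refine ⟨Finset.mem_Icc.2 h1.1, ?_, h0.1.1, by omega⟩
        funext j
        fin_cases j <;> simp
    _ = n * fword w n 1 := by simp

lemma ncard_lineStarts_column_le (hk : 0 < k) (G : (Fin 2 → ℤ) → α) :
    (lineStarts n 2 w G ![0, 1]).ncard ≤ n * fword w n 1 :=
  calc (lineStarts n 2 w G ![0, 1]).ncard ≤ ∑ _c ∈ Finset.Icc (1 : ℤ) n, fword w n 1 := by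
        refine ncard_lineStarts_le_sum_fword w hk G _ _ (fun p => p 0) (fun p => p 1)
          (fun c => ![c, 0]) (fun _ => n) fun p hp => ?_
        have h0 := hp.1.endpoint_bounds hk 0
        have h1 := hp.1.endpoint_bounds hk 1
        simp only [Matrix.cons_val_zero, Matrix.cons_val_one, mul_one, mul_zero, add_zero] at h0 h1
        refine ⟨Finset.mem_Icc.2 h0.1, ?_, h1.1.1, by omega⟩
        funext j
        fin_cases j <;> simp
    _ = n * fword w n 1 := by simp

lemma ncard_lineStarts_diag_le (hk : 0 < k) (G : (Fin 2 → ℤ) → α) :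
    (lineStarts n 2 w G ![1, 1]).ncard ≤ 2 * ∑ i ∈ Finset.Icc k n, fword w i 1 :=
  calc (lineStarts n 2 w G ![1, 1]).ncard
      ≤ ∑ c ∈ Finset.Icc ((k : ℤ) - n) (n - k), fword w (n - c.natAbs) 1 := by
        refine ncard_lineStarts_le_sum_fword w hk G _ _ (fun p => p 0 - p 1)
          (fun p => p 0 - max (p 0 - p 1) 0) (fun c => ![max c 0, max (-c) 0])
          (fun c => n - c.natAbs) fun p hp => ?_
        have h0 := hp.1.endpoint_bounds hk 0
        have h1 := hp.1.endpoint_bounds hk 1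
        simp only [Matrix.cons_val_zero, Matrix.cons_val_one, mul_one] at h0 h1
        refine ⟨Finset.mem_Icc.2 (by omega), ?_, by omega, by omega⟩
        funext j
        fin_cases j <;> simp
        omega
    _ ≤ 2 * ∑ i ∈ Finset.Icc k n, fword w i 1 :=
        sum_Icc_natAbs_le fun i => fword w i 1

lemma ncard_lineStarts_antidiag_le (hk : 0 < k) (G : (Fin 2 → ℤ) → α) :
    (lineStarts n 2 w G ![1, -1]).ncard ≤ 2 * ∑ i ∈ Finset.Icc k n, fword w i 1 :=
  calc (lineStarts n 2 w G ![1, -1]).ncard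
      ≤ ∑ c ∈ Finset.Icc ((k : ℤ) - n) (n - k), fword w (n - c.natAbs) 1 := by
        refine ncard_lineStarts_le_sum_fword w hk G _ _ (fun p => p 0 + p 1 - (n + 1))
          (fun p => p 0 - max (p 0 + p 1 - (n + 1)) 0) (fun c => ![max c 0, n + 1 + min c 0])
          (fun c => n - c.natAbs) fun p hp => ?_
        have h0 := hp.1.endpoint_bounds hk 0
        have h1 := hp.1.endpoint_bounds hk 1
        simp only [Matrix.cons_val_zero, Matrix.cons_val_one, mul_one, mul_neg] at h0 h1
        refine ⟨Finset.mem_Icc.2 (by omega), ?_, by omega, by omega⟩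
        funext j
        fin_cases j <;> simp
        omega
    _ ≤ 2 * ∑ i ∈ Finset.Icc k n, fword w i 1 :=
        sum_Icc_natAbs_le fun i => fword w i 1

lemma fword_two_le (hk : 0 < k) :
    fword w n 2 ≤ fword w n 1 * (2 * n) + 4 * ∑ i ∈ Finset.Icc k n, fword w i 1 := by
  refine fword_le_of_forall_count_le w hk fun G => ?_
  rw [count_two_eq w hk]
  linarith [ncard_lineStarts_row_le (n := n) w hk G, ncard_lineStarts_column_le (n := n) w hk G,
    ncard_lineStarts_diag_le (n := n) w hk G, ncard_lineStarts_antidiag_le (n := n) w hk G]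

lemma fword_one_mul_le_fword_two (hk : 0 < k) :
    fword w n 1 * (n + 2 * (n + 1 - k)) ≤ fword w n 2 := by
  obtain ⟨G, hG⟩ := exists_count_eq_fword (n := n) (d := 1) w hk
  rw [← hG, count_one_eq w hk]
  have hrow := card_mul_ncard_le_ncard_lineStarts_two (n := n) w hk G (Or.inr (Or.inl rfl))
    (Finset.Icc 1 n) fun y hy i hi => by simp only [Finset.mem_Icc] at hy; omega
  have hdiag := card_mul_ncard_le_ncard_lineStarts_two (n := n) w hk G (Or.inr (Or.inr rfl))
    (Finset.Icc 1 (n + 1 - k)) fun y hy i hi => by simp only [Finset.mem_Icc] at hy; omega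
  have hanti := card_mul_ncard_le_ncard_lineStarts_two (n := n) w hk G (Or.inl rfl)
    (Finset.Icc k n) fun y hy i hi => by simp only [Finset.mem_Icc] at hy; omega
  simp only [Nat.card_Icc, add_tsub_cancel_right] at hrow hdiag hanti
  have hcount := count_le_fword (n := n) w hk (fun q : Fin 2 → ℤ => G (fun _ => q 0))
  rw [count_two_eq w hk] at hcount
  linarith

end

theorem short_word_bounds_general {k n : ℕ} (hk : 2 ≤ k) (w : Fin k → α) :
    (fword w n 1 : ℤ) * (3 * n - 4 * k) ≤ (fword w n 2 : ℤ) ∧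
    fword w n 2 ≤ fword w n 1 * (2 * n) + 4 * ∑ i ∈ Finset.Icc k n, fword w i 1 := by
  have hk0 : 0 < k := by omega
  refine ⟨?_, fword_two_le w hk0⟩
  calc (fword w n 1 : ℤ) * (3 * n - 4 * k)
      ≤ (fword w n 1 : ℤ) * ((n + 2 * (n + 1 - k) : ℕ) : ℤ) :=
        mul_le_mul_of_nonneg_left (by omega) (Int.natCast_nonneg _)
    _ ≤ fword w n 2 := by exact_mod_cast fword_one_mul_le_fword_two w hk0

theorem short_word_bounds {k n : ℕ} (hk : 2 ≤ k) (hn : k ≤ n) (w : Fin k → α) :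
    (fword w n 1 : ℤ) * (3 * n - 4 * k) ≤ (fword w n 2 : ℤ) ∧
    fword w n 2 ≤ fword w n 1 * (2 * n) + 4 * ∑ i ∈ Finset.Icc k n, fword w i 1 :=
  short_word_bounds_general hk w

end ShortWordGrid
end
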